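/- Partial orders satisfying the must-happen-before criterion yield sound lock sets: if a strict partial order <_P on the events of T satisfies that e <_P f implies e precedes f in every correctly reordered prefix containing f, then for every event e of T, the P-lock set of e is a subset of the trace-based lock set of e: LH_P(e) ⊆ LH_all(e). -/

import Mathlib

inductive Op where
  | read : ℕ → Op
  | write : ℕ → Op
  | req : ℕ → Op
  | acq : ℕ → Op
  | rel : ℕ → Op
deriving DecidableEq

structure Event where
  id : ℕ
  thd : ℕ
  op : Op
deriving DecidableEq

/-- Trace order: `e` occurs strictly before `f` in trace `T`. -/
def TrLt (T : List Event) (e f : Event) : Prop :=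
  e ∈ T ∧ f ∈ T ∧ T.idxOf e < T.idxOf f

def IsAcq (e : Event) (l : ℕ) : Prop := e.op = Op.acq l
def IsRel (e : Event) (l : ℕ) : Prop := e.op = Op.rel l
def IsRead (e : Event) (x : ℕ) : Prop := e.op = Op.read x
def IsWrite (e : Event) (x : ℕ) : Prop := e.op = Op.write x
def IsReq (e : Event) (l : ℕ) : Prop := e.op = Op.req l

/-- `r` is the matching release of acquire `a` in `T`. -/
def Matches (T : List Event) (a r : Event) : Prop :=
  ∃ l, IsAcq a l ∧ IsRel r l ∧ a.thd = r.thd ∧ TrLt T a r ∧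
    ∀ r' ∈ T, IsRel r' l → ¬ (TrLt T a r' ∧ TrLt T r' r)

/-- Well-formedness of a trace. -/
structure WF (T : List Event) : Prop where
  nodup : T.Nodup
  wfAcq : ∀ a a' l, a ∈ T → a' ∈ T → IsAcq a l → IsAcq a' l → TrLt T a a' →
    ∃ r ∈ T, IsRel r l ∧ r.thd = a.thd ∧ TrLt T a r ∧ TrLt T r a'
  wfRel : ∀ r l, r ∈ T → IsRel r l →
    ∃ a ∈ T, IsAcq a l ∧ a.thd = r.thd ∧ TrLt T a r ∧
      ∀ r' ∈ T, IsRel r' l → ¬ (TrLt T a r' ∧ TrLt T r' r)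
  wfReqBefore : ∀ a l, a ∈ T → IsAcq a l →
    ∃ q ∈ T, IsReq q l ∧ q.thd = a.thd ∧ TrLt T q a ∧
      ∀ f ∈ T, f.thd = a.thd → ¬ (TrLt T q f ∧ TrLt T f a)
  wfReqAfter : ∀ q l e, q ∈ T → IsReq q l → e ∈ T → e.thd = q.thd → TrLt T q e →
    (∀ f ∈ T, f.thd = q.thd → ¬ (TrLt T q f ∧ TrLt T f e)) → IsAcq e l

/-- Projection of a trace onto a thread. -/
def projT (T : List Event) (t : ℕ) : List Event := T.filter (fun e => e.thd = t)

/-- `w` is the last write observed by read `e` in `T`. -/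
def LastWrite (T : List Event) (w e : Event) : Prop :=
  ∃ x, IsRead e x ∧ IsWrite w x ∧ TrLt T w e ∧
    ∀ w' ∈ T, IsWrite w' x → ¬ (TrLt T w w' ∧ TrLt T w' e)

/-- `T'` is a correctly reordered prefix of `T`. -/
def CRP (T T' : List Event) : Prop :=
  WF T' ∧ (∀ e ∈ T', e ∈ T) ∧
  (∀ t, (projT T' t) <+: (projT T t)) ∧
  (∀ e w, e ∈ T' → LastWrite T w e → LastWrite T' w e)

/-- `e` must precede `f` under all correctly reordered prefixes. -/
def MustPrecede (T : List Event) (e f : Event) : Prop :=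
  ∀ T', CRP T T' → f ∈ T' → e ∈ T' ∧ TrLt T' e f

/-- Thread order. -/
def ThreadLt (T : List Event) (e f : Event) : Prop :=
  e.thd = f.thd ∧ TrLt T e f

/-- Last-write order: smallest transitive relation containing thread order
and last-write dependencies. -/
inductive LWOrder (T : List Event) : Event → Event → Prop
  | to : ∀ e f, ThreadLt T e f → LWOrder T e f
  | lw : ∀ w e, LastWrite T w e → LWOrder T w e
  | trans : ∀ e f g, LWOrder T e f → LWOrder T f g → LWOrder T e g

/-- `e` is inside the thread-order critical section of acquire `a` with
matching release `r`. -/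
def InCSto (T : List Event) (a r e : Event) : Prop :=
  Matches T a r ∧ ThreadLt T a e ∧ ThreadLt T e r

/-- Release order. -/
inductive ROOrder (T : List Event) : Event → Event → Prop
  | lw : ∀ e f, LWOrder T e f → ROOrder T e f
  | rel : ∀ a r a' r' e f l, Matches T a r → Matches T a' r' → a ≠ a' →
      IsAcq a l → IsAcq a' l → InCSto T a r e → InCSto T a' r' f →
      LWOrder T e f → ROOrder T r f
  | trans : ∀ e f g, ROOrder T e f → ROOrder T f g → ROOrder T e g

/-- CS-Match: no other release on `l` in thread of `a` can come between `a`
and `e` in any correctly reordered prefix. -/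
def CSMatch (T : List Event) (a e : Event) (l : ℕ) : Prop :=
  ¬ ∃ r' T', r' ∈ T ∧ IsRel r' l ∧ r'.thd = a.thd ∧ CRP T T' ∧
    TrLt T' a r' ∧ TrLt T' r' e

/-- Trace-based critical section membership. -/
def InCSAll (T : List Event) (a r e : Event) : Prop :=
  ∃ l, IsAcq a l ∧ IsRel r l ∧ a.thd = r.thd ∧ a ∈ T ∧ r ∈ T ∧
    MustPrecede T a e ∧ MustPrecede T e r ∧ CSMatch T a e l

/-- Partial-order-based critical section membership. -/
def InCSP (T : List Event) (P : Event → Event → Prop) (a r e : Event) : Prop :=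
  ∃ l, IsAcq a l ∧ IsRel r l ∧ a.thd = r.thd ∧ a ∈ T ∧ r ∈ T ∧
    P a e ∧ P e r ∧ CSMatch T a e l

/-- Trace-based lock set. -/
def LHAll (T : List Event) (e : Event) : Set (ℕ × ℕ) :=
  { p | ∃ a r, IsAcq a p.1 ∧ a.thd = p.2 ∧ InCSAll T a r e }

/-- Partial-order-based lock set. -/
def LHP (T : List Event) (P : Event → Event → Prop) (e : Event) : Set (ℕ × ℕ) :=
  { p | ∃ a r, IsAcq a p.1 ∧ a.thd = p.2 ∧ InCSP T P a r e }

/-- Guard intersection: common locks held by distinct threads. -/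
def HatInter (M N : Set (ℕ × ℕ)) : Set ℕ :=
  { l | ∃ s t, (l, s) ∈ M ∧ (l, t) ∈ N ∧ s ≠ t }

/-- `e` is final in `T'`: no later event of the same thread. -/
def Final (T' : List Event) (e : Event) : Prop :=
  e ∈ T' ∧ ∀ f ∈ T', f.thd = e.thd → ¬ TrLt T' e f

/-- `a` is the acquire fulfilling request `q` in `T`. -/
def Fulfills (T : List Event) (q a : Event) : Prop :=
  ∃ l, IsReq q l ∧ IsAcq a l ∧ a.thd = q.thd ∧ TrLt T q a ∧
    ∀ f ∈ T, f.thd = q.thd → ¬ (TrLt T q f ∧ TrLt T f a)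

/-- `T'` is sync preserving w.r.t. `T`. -/
def SyncPreserving (T T' : List Event) : Prop :=
  ∀ a a' l, a ∈ T' → a' ∈ T' → IsAcq a l → IsAcq a' l → a ≠ a' →
    (TrLt T' a a' ↔ TrLt T a a')

/-- Sync-preserving closure of a set of events. -/
inductive SPClosure (T : List Event) (S : Set Event) : Event → Prop
  | base : ∀ e, e ∈ S → SPClosure T S e
  | lwc : ∀ e f, LWOrder T e f → SPClosure T S f → SPClosure T S e
  | spc : ∀ a a' r l, IsAcq a l → IsAcq a' l → a ≠ a' → TrLt T a a' →
      Matches T a r → SPClosure T S a' → SPClosure T S r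

theorem mhb_lockset_sound (T : List Event) (P : Event → Event → Prop)
    (hirr : ∀ e, ¬ P e e)
    (htrans : ∀ e f g, P e f → P f g → P e g)
    (hdom : ∀ e f, P e f → e ∈ T ∧ f ∈ T)
    (hmhb : ∀ e f, P e f → MustPrecede T e f) :
    ∀ e, LHP T P e ⊆ LHAll T e := by
  rintro e ⟨l, t⟩ ⟨a, r, hacq, hthd, l', ha, hr, hth, haT, hrT, hPae, hPer, hcs⟩
  exact ⟨a, r, hacq, hthd, l', ha, hr, hth, haT, hrT, hmhb _ _ hPae, hmhb _ _ hPer, hcs⟩
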